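/- For every positive integer n, the number of atomic partitions of [n] equals the number of unsplitable partitions of [n], i.e., |A_n| = |US_n|. -/

import Mathlib

/-- A block of a set partition: a finite set of positive integers. -/
abbrev Block : Type := Finset ℕ

/-- The underlying set of a list of blocks (the union of all blocks). -/
def support (P : List Block) : Finset ℕ := P.foldr (· ∪ ·) ∅

/-- `P` is a set partition of `[n] = {1,…,n}`: a list of pairwise disjoint nonempty
blocks with union `{1,…,n}`, listed in increasing order of their minimal elements. -/
def IsPartition (n : ℕ) (P : List Block) : Prop :=
  (∀ B ∈ P, B.Nonempty) ∧ List.Pairwise Disjoint P ∧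
    support P = Finset.Icc 1 n ∧
    List.Chain' (fun B C : Block => B.min < C.min) P

/-- Add `m` to every element of every block: `σ + m`. -/
def shiftUp (m : ℕ) (P : List Block) : List Block := P.map fun B => B.image (· + m)

/-- Subtract `m` from every element of every block. -/
def shiftDown (m : ℕ) (P : List Block) : List Block := P.map fun B => B.image (· - m)

/-- The slash product `π | σ` where `π` is a partition of `[m]`. -/
def slash (m : ℕ) (P Q : List Block) : List Block := P ++ shiftUp m Q

/-- `P` is an atomic partition of `[n]`: it is not a slash product of two
nonempty partitions. -/
def Atomic (n : ℕ) (P : List Block) : Prop :=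
  ¬ ∃ (a b : ℕ) (σ τ : List Block), 0 < a ∧ 0 < b ∧ a + b = n ∧
      IsPartition a σ ∧ IsPartition b τ ∧ P = slash a σ τ

/-- The split product `π ∘ σ` where `π` is a partition of `[m]`. -/
def splitProd (m : ℕ) (P Q : List Block) : List Block :=
  List.zipWith (· ∪ ·) P (shiftUp m Q) ++ P.drop Q.length ++ (shiftUp m Q).drop P.length

/-- `P` is a splitable partition of `[n]`: a split product of two nonempty partitions. -/
def Splitable (n : ℕ) (P : List Block) : Prop :=
  ∃ (a b : ℕ) (σ τ : List Block), 0 < a ∧ 0 < b ∧ a + b = n ∧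
      IsPartition a σ ∧ IsPartition b τ ∧ P = splitProd a σ τ

/-- The minimum of a block (`0` for the empty block). -/
def blockMin (B : Block) : ℕ := B.min.untopD 0

/-- The restriction `π_S`: the nonempty intersections `B ∩ S`, listed in
increasing order of their minimal elements. -/
def restrict (P : List Block) (S : Finset ℕ) : List Block :=
  (((P.map (· ∩ S)).filter fun B => decide B.Nonempty).mergeSort
    fun B C => decide (blockMin B ≤ blockMin C))

/-- The blocks from position `d` on have union equal to an upper part
`{x_t, x_{t+1}, …, x_n}` of the underlying set. -/
def IsUpperSuffix (P : List Block) (d : ℕ) : Prop :=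
  ∃ s ∈ support P, support (P.drop d) = (support P).filter (s ≤ ·)

instance (P : List Block) : DecidablePred (IsUpperSuffix P) := fun d => by
  unfold IsUpperSuffix; infer_instance

/-- `R(π)`: the longest proper-or-improper final segment `{B_r,…,B_k}` of the blocks
whose union is an upper part `{x_t,…,x_n}` of the underlying set. -/
def Rmap (P : List Block) : List Block :=
  P.drop ((((Finset.range P.length).filter fun d => IsUpperSuffix P d).max).unbotD 0)

/-- `π = π_{[i-1]} ∘ (π_{[i,n]} − i + 1)`. -/
def SplitsAt (n i : ℕ) (P : List Block) : Prop :=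
  P = splitProd (i - 1) (restrict P (Finset.Icc 1 (i - 1)))
        (shiftDown (i - 1) (restrict P (Finset.Icc i n)))

instance (n : ℕ) (P : List Block) : DecidablePred fun i => SplitsAt n i P := fun i => by
  unfold SplitsAt; infer_instance

/-- The index `i` in the definition of `φ`: the smallest element of the first block
`B_1` such that `π = π_{[i-1]} ∘ (π_{[i,n]} − i + 1)`. -/
def phiI (n : ℕ) (P : List Block) : ℕ :=
  (((P.headD ∅).filter fun i => 2 ≤ i ∧ SplitsAt n i P).min).untopD 0

/-- The index `j` in the definition of `φ`: the smallest element of the underlying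
set of `R(π_{[i,n]})`. -/
def phiJ (n : ℕ) (P : List Block) : ℕ :=
  ((support (Rmap (restrict P (Finset.Icc (phiI n P) n)))).min).untopD 0

/-- The map `φ`: `φ(π) = π_{[j-1]} | (π_{[j,n]} − j + 1)`. -/
def phi (n : ℕ) (P : List Block) : List Block :=
  slash (phiJ n P - 1) (restrict P (Finset.Icc 1 (phiJ n P - 1)))
    (shiftDown (phiJ n P - 1) (restrict P (Finset.Icc (phiJ n P) n)))

/-- `σ_{[j-1]} = σ_{[i-1]} ∘ (σ_{[i,j-1]} − i + 1)`. -/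
def SplitsAtRes (j i : ℕ) (P : List Block) : Prop :=
  restrict P (Finset.Icc 1 (j - 1)) =
    splitProd (i - 1) (restrict P (Finset.Icc 1 (i - 1)))
      (shiftDown (i - 1) (restrict P (Finset.Icc i (j - 1))))

instance (j : ℕ) (P : List Block) : DecidablePred fun i => SplitsAtRes j i P := fun i => by
  unfold SplitsAtRes; infer_instance

open scoped Classical in
/-- The map `ψ`. Here `j` is the smallest element of the underlying set of `R(σ)`,
`r` is the (0-based) position of the first block of `R(σ)`, and in the splitable case
`i` is the smallest element of `B_1` with `σ_{[j-1]} = σ_{[i-1]} ∘ (σ_{[i,j-1]} − i + 1)`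
and `q` is the (0-based) position of the first block contained in `[i-1]`. -/
noncomputable def psi (n : ℕ) (P : List Block) : List Block :=
  let j := ((support (Rmap P)).min).untopD 0
  if Splitable (j - 1) (restrict P (Finset.Icc 1 (j - 1))) then
    let i := (((P.headD ∅).filter fun i => 2 ≤ i ∧ SplitsAtRes j i P).min).untopD 0
    let q := P.findIdx fun B => decide (B ⊆ Finset.Icc 1 (i - 1))
    let r := P.length - (Rmap P).length
    P.take q ++ (List.zipWith (· ∪ ·) ((P.drop q).take (r - q)) (P.drop r)
      ++ ((P.drop q).take (r - q)).drop (P.drop r).length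
      ++ (P.drop r).drop (r - q))
  else
    splitProd (j - 1) (restrict P (Finset.Icc 1 (j - 1)))
      (shiftDown (j - 1) (restrict P (Finset.Icc j n)))

/-!
Both the slash and the split product are associative, have the empty partition as a right unit,
and every partition of `[n]` with `n > 0` factors uniquely as `σ ⋆ τ` with `σ` an indecomposable
(atomic, resp. unsplitable) partition of some `[a]`, `a ≥ 1`, and `τ` a partition of `[n - a]`:
take `a` minimal. Hence, writing `B n` for the number of partitions of `[n]` and `I a` for the
number of indecomposable ones,
`B n = ∑ a ∈ [1, n], I a * B (n - a)` for both products, and this recurrence determines `I n`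
from `B 1, …, B n`.
-/

open Finset

section Support

variable {P Q : List Block}

@[simp] lemma support_nil : support [] = ∅ := rfl

@[simp] lemma support_cons (B : Block) (P : List Block) : support (B :: P) = B ∪ support P := rfl

lemma mem_support {x : ℕ} : x ∈ support P ↔ ∃ B ∈ P, x ∈ B := by
  induction P with
  | nil => simp
  | cons B P ih => simp [ih]

@[simp] lemma support_append : support (P ++ Q) = support P ∪ support Q := by
  induction P with
  | nil => simp
  | cons B P ih => simp [ih, union_assoc]

@[simp] lemma length_shiftUp (m : ℕ) : (shiftUp m P).length = P.length := by
  simp [shiftUp]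

lemma shiftUp_append (m : ℕ) : shiftUp m (P ++ Q) = shiftUp m P ++ shiftUp m Q :=
  List.map_append ..

@[simp] lemma support_shiftUp (m : ℕ) : support (shiftUp m P) = (support P).image (· + m) := by
  induction P with
  | nil => simp [shiftUp]
  | cons B P ih => simp_all [shiftUp, image_union]

lemma getD_shiftUp (m i : ℕ) : (shiftUp m P).getD i ∅ = (P.getD i ∅).image (· + m) := by
  simpa [shiftUp] using List.getD_map P ∅ (n := i) fun B : Block => B.image (· + m)

lemma shiftUp_shiftUp (k m : ℕ) (P : List Block) :
    shiftUp k (shiftUp m P) = shiftUp (m + k) P := by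
  simp [shiftUp, Function.comp_def, image_image, add_assoc]

lemma shiftUp_injective (m : ℕ) : Function.Injective (shiftUp m) :=
  List.map_injective_iff.2 (image_injective (add_left_injective m))

lemma getD_subset_support (i : ℕ) : P.getD i ∅ ⊆ support P := by
  rcases lt_or_ge i P.length with hi | hi
  · rw [List.getD_eq_getElem _ _ hi]
    exact fun x hx => mem_support.2 ⟨_, List.getElem_mem hi, hx⟩
  · rw [List.getD_eq_default _ _ hi]
    exact empty_subset _

lemma mem_support_iff_getD {x : ℕ} : x ∈ support P ↔ ∃ i, x ∈ P.getD i ∅ := by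
  refine ⟨fun hx => ?_, fun ⟨i, hx⟩ => getD_subset_support i hx⟩
  obtain ⟨B, hB, hx⟩ := mem_support.1 hx
  obtain ⟨i, hi, rfl⟩ := List.mem_iff_getElem.1 hB
  exact ⟨i, by rwa [List.getD_eq_getElem _ _ hi]⟩

end Support

def zipUnion : List Block → List Block → List Block
  | [], Q => Q
  | B :: P, [] => B :: P
  | B :: P, C :: Q => (B ∪ C) :: zipUnion P Q

@[simp] lemma zipUnion_nil_left (Q : List Block) : zipUnion [] Q = Q := rfl

@[simp] lemma zipUnion_nil_right (P : List Block) : zipUnion P [] = P := by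
  cases P <;> rfl

@[simp] lemma zipUnion_cons_cons (B C : Block) (P Q : List Block) :
    zipUnion (B :: P) (C :: Q) = (B ∪ C) :: zipUnion P Q := rfl

lemma length_zipUnion (P Q : List Block) :
    (zipUnion P Q).length = max P.length Q.length := by
  induction P generalizing Q with
  | nil => simp
  | cons B P ih => cases Q <;> simp [ih]

lemma getD_zipUnion (P Q : List Block) (i : ℕ) :
    (zipUnion P Q).getD i ∅ = P.getD i ∅ ∪ Q.getD i ∅ := by
  induction P generalizing Q i with
  | nil => simp
  | cons B P ih =>
    cases Q with
    | nil => simp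
    | cons C Q => cases i with
      | zero => simp
      | succ i => simpa using ih Q i

lemma support_zipUnion (P Q : List Block) :
    support (zipUnion P Q) = support P ∪ support Q := by
  induction P generalizing Q with
  | nil => simp
  | cons B P ih => cases Q <;> simp [ih, union_assoc, union_left_comm]

lemma zipUnion_assoc (P Q R : List Block) :
    zipUnion (zipUnion P Q) R = zipUnion P (zipUnion Q R) := by
  induction P generalizing Q R with
  | nil => simp
  | cons B P ih => cases Q <;> cases R <;> simp [ih, union_assoc]

lemma shiftUp_zipUnion (m : ℕ) (P Q : List Block) :
    shiftUp m (zipUnion P Q) = zipUnion (shiftUp m P) (shiftUp m Q) := by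
  induction P generalizing Q with
  | nil => simp [shiftUp]
  | cons B P ih => cases Q <;> simp_all [shiftUp, image_union]

lemma splitProd_eq_zipUnion (m : ℕ) (P Q : List Block) :
    splitProd m P Q = zipUnion P (shiftUp m Q) := by
  suffices h : ∀ P S : List Block,
      List.zipWith (· ∪ ·) P S ++ P.drop S.length ++ S.drop P.length = zipUnion P S by
    rw [splitProd, ← length_shiftUp m, h]
  intro P
  induction P with
  | nil => simp
  | cons B P ih => intro S; cases S <;> simp [ih]

lemma coe_lt_min {x : ℕ} {C : Block} (h : ∀ y ∈ C, x < y) : (x : WithTop ℕ) < C.min :=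
  (WithTop.coe_lt_coe.2 x.lt_succ_self).trans_le
    (Finset.le_min fun y hy => WithTop.coe_le_coe.2 (h y hy))

lemma min_filter_le_of_nonempty {α : Type*} [LinearOrder α] {s : Finset α} {c : α}
    (h : (s.filter (· ≤ c)).Nonempty) : (s.filter (· ≤ c)).min = s.min := by
  refine le_antisymm ?_ (min_mono (filter_subset _ s))
  obtain ⟨x, hx⟩ := h
  have hs : s.Nonempty := ⟨x, (mem_filter.1 hx).1⟩
  have hmem : s.min' hs ∈ s.filter (· ≤ c) :=
    mem_filter.2 ⟨s.min'_mem hs, (s.min'_le x (mem_filter.1 hx).1).trans (mem_filter.1 hx).2⟩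
  exact (min_le hmem).trans (coe_min' hs).le

def IsBlockList (P : List Block) : Prop :=
  (∀ B ∈ P, B.Nonempty) ∧ P.Pairwise fun B C => Disjoint B C ∧ B.min < C.min

namespace IsBlockList

variable {P Q : List Block}

lemma sublist (hP : IsBlockList P) (h : Q.Sublist P) : IsBlockList Q :=
  ⟨fun B hB => hP.1 B (h.subset hB), hP.2.sublist h⟩

lemma append (hP : IsBlockList P) (hQ : IsBlockList Q)
    (hPQ : ∀ x ∈ support P, ∀ y ∈ support Q, x < y) : IsBlockList (P ++ Q) := by
  refine ⟨fun B hB => (List.mem_append.1 hB).elim (hP.1 B) (hQ.1 B),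
    List.pairwise_append.2 ⟨hP.2, hQ.2, fun B hB C hC => ?_⟩⟩
  have hlt : ∀ x ∈ B, ∀ y ∈ C, x < y := fun x hx y hy =>
    hPQ x (mem_support.2 ⟨B, hB, hx⟩) y (mem_support.2 ⟨C, hC, hy⟩)
  obtain ⟨x, hx⟩ := hP.1 B hB
  exact ⟨disjoint_left.2 fun z hzB hzC => (hlt z hzB z hzC).false,
    (min_le hx).trans_lt (coe_lt_min (hlt x hx))⟩

lemma shiftUp (hP : IsBlockList P) (m : ℕ) : IsBlockList (shiftUp m P) := by
  refine ⟨fun B hB => ?_, List.pairwise_map.2 (hP.2.imp fun {B C} ⟨hd, hlt⟩ => ⟨?_, ?_⟩)⟩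
  · obtain ⟨B, hB', rfl⟩ := List.mem_map.1 hB
    exact (hP.1 B hB').image _
  · exact (disjoint_image (add_left_injective m)).2 hd
  · have hB : B.Nonempty := nonempty_iff_ne_empty.2 fun h => by simp [h] at hlt
    rw [← coe_min' hB] at hlt
    refine (min_le (mem_image_of_mem _ (B.min'_mem hB))).trans_lt (coe_lt_min ?_)
    intro z hz
    obtain ⟨y, hy, rfl⟩ := mem_image.1 hz
    have : B.min' hB < y := WithTop.coe_lt_coe.1 (hlt.trans_le (min_le hy))
    exact Nat.add_lt_add_right this m

lemma nodup (hP : IsBlockList P) : P.Nodup :=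
  hP.2.imp fun h hBC => h.2.ne (congrArg _ hBC)

lemma getD_nonempty_iff (hP : IsBlockList P) {i : ℕ} :
    (P.getD i ∅).Nonempty ↔ i < P.length := by
  rcases lt_or_ge i P.length with hi | hi
  · rw [List.getD_eq_getElem _ _ hi]
    exact iff_of_true (hP.1 _ (List.getElem_mem hi)) hi
  · rw [List.getD_eq_default _ _ hi]
    simpa using hi

lemma disjoint_and_min_lt_getD (hP : IsBlockList P) {i j : ℕ} (hij : i < j) (hj : j < P.length) :
    Disjoint (P.getD i ∅) (P.getD j ∅) ∧ (P.getD i ∅).min < (P.getD j ∅).min := by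
  rw [List.getD_eq_getElem _ _ (hij.trans hj), List.getD_eq_getElem _ _ hj]
  exact List.pairwise_iff_getElem.1 hP.2 i j _ hj hij

lemma disjoint_getD (hP : IsBlockList P) {i j : ℕ} (hij : i ≠ j) :
    Disjoint (P.getD i ∅) (P.getD j ∅) := by
  wlog hlt : i < j generalizing i j
  · exact (this hij.symm (hij.lt_or_gt.resolve_left hlt)).symm
  rcases lt_or_ge j P.length with hj | hj
  · exact (hP.disjoint_and_min_lt_getD hlt hj).1
  · rw [List.getD_eq_default _ _ hj]
    exact disjoint_empty_right _

lemma min_getD_lt (hP : IsBlockList P) {i j : ℕ} (hij : i < j) (hi : i < P.length) :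
    (P.getD i ∅).min < (P.getD j ∅).min := by
  rcases lt_or_ge j P.length with hj | hj
  · exact (hP.disjoint_and_min_lt_getD hij hj).2
  · rw [List.getD_eq_default _ _ hj, min_empty, lt_top_iff_ne_top, Ne, Finset.min_eq_top,
      ← not_nonempty_iff_eq_empty, not_not]
    exact hP.getD_nonempty_iff.2 hi

lemma ext_getD (hP : IsBlockList P) (hQ : IsBlockList Q) (h : ∀ i, P.getD i ∅ = Q.getD i ∅) :
    P = Q := by
  have hlen : P.length = Q.length := by
    refine le_antisymm ?_ ?_ <;> by_contra! hlt
    · exact (hQ.getD_nonempty_iff.1 (h Q.length ▸ hP.getD_nonempty_iff.2 hlt)).false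
    · exact (hP.getD_nonempty_iff.1 ((h P.length).symm ▸ hQ.getD_nonempty_iff.2 hlt)).false
  refine List.ext_getElem hlen fun i h1 h2 => ?_
  simpa only [List.getD_eq_getElem _ _ h1, List.getD_eq_getElem _ _ h2] using h i

end IsBlockList

lemma isBlockList_of_getD {P : List Block} (hne : ∀ i < P.length, (P.getD i ∅).Nonempty)
    (hrel : ∀ i j, i < j → j < P.length →
      Disjoint (P.getD i ∅) (P.getD j ∅) ∧ (P.getD i ∅).min < (P.getD j ∅).min) :
    IsBlockList P := by
  refine ⟨List.forall_mem_iff_getElem.2 fun i hi => ?_,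
    List.pairwise_iff_getElem.2 fun i j hi hj hij => ?_⟩
  · simpa only [List.getD_eq_getElem _ _ hi] using hne i hi
  · simpa only [List.getD_eq_getElem _ _ hi, List.getD_eq_getElem _ _ hj] using hrel i j hij hj

lemma isBlockList_zipUnion {P Q : List Block} (hP : IsBlockList P) (hQ : IsBlockList Q)
    (hPQ : Disjoint (support P) (support Q)) : IsBlockList (zipUnion P Q) := by
  have hne : ∀ i < (zipUnion P Q).length, ((zipUnion P Q).getD i ∅).Nonempty := by
    intro i hi
    rw [length_zipUnion, lt_max_iff, ← hP.getD_nonempty_iff, ← hQ.getD_nonempty_iff] at hi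
    rw [getD_zipUnion]
    exact hi.elim (fun h => h.mono subset_union_left) (fun h => h.mono subset_union_right)
  refine isBlockList_of_getD hne fun i j hij hj => ?_
  have hE : ((zipUnion P Q).getD i ∅).min < ⊤ := by
    rw [lt_top_iff_ne_top, Ne, Finset.min_eq_top, ← not_nonempty_iff_eq_empty, not_not]
    exact hne i (hij.trans hj)
  have hlt : ∀ R : List Block, IsBlockList R → R.getD i ∅ ⊆ (zipUnion P Q).getD i ∅ →
      ((zipUnion P Q).getD i ∅).min < (R.getD j ∅).min := by
    intro R hR hsub
    rcases lt_or_ge i R.length with hi | hi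
    · exact (min_mono hsub).trans_lt (hR.min_getD_lt hij hi)
    · rwa [List.getD_eq_default _ _ (hi.trans hij.le), min_empty]
  rw [getD_zipUnion] at hlt hE ⊢
  rw [getD_zipUnion, min_union (s := P.getD j ∅), lt_inf_iff]
  refine ⟨?_, hlt P hP subset_union_left, hlt Q hQ subset_union_right⟩
  simp only [disjoint_union_left, disjoint_union_right]
  exact ⟨⟨hP.disjoint_getD hij.ne, (hPQ.mono (getD_subset_support j) (getD_subset_support i)).symm⟩,
    ⟨hPQ.mono (getD_subset_support i) (getD_subset_support j), hQ.disjoint_getD hij.ne⟩⟩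

lemma isPartition_iff {n : ℕ} {P : List Block} :
    IsPartition n P ↔ IsBlockList P ∧ support P = Icc 1 n := by
  have : Trans (fun B C : Block => B.min < C.min) (fun B C : Block => B.min < C.min)
      (fun B C : Block => B.min < C.min) := ⟨lt_trans⟩
  rw [IsBlockList, List.pairwise_and_iff]
  exact ⟨fun ⟨h1, h2, h3, h4⟩ => ⟨⟨h1, h2, List.isChain_iff_pairwise.1 h4⟩, h3⟩,
    fun ⟨⟨h1, h2, h4⟩, h3⟩ => ⟨h1, h2, h3, List.isChain_iff_pairwise.2 h4⟩⟩

namespace IsPartition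

variable {n : ℕ} {P : List Block}

lemma isBlockList (hP : IsPartition n P) : IsBlockList P := (isPartition_iff.1 hP).1

lemma support_eq (hP : IsPartition n P) : support P = Icc 1 n := (isPartition_iff.1 hP).2

lemma mem_Icc {x : ℕ} (hP : IsPartition n P) (hx : x ∈ support P) : x ∈ Icc 1 n :=
  hP.support_eq ▸ hx

lemma unique {m : ℕ} (hm : IsPartition m P) (hn : IsPartition n P) : m = n := by
  simpa using congrArg card (hm.support_eq.symm.trans hn.support_eq)

end IsPartition

lemma isPartition_zero_iff {P : List Block} : IsPartition 0 P ↔ P = [] := by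
  refine ⟨fun hP => ?_, fun h => isPartition_iff.2 ⟨?_, by simp [h]⟩⟩
  · match P, hP with
    | [], _ => rfl
    | B :: _, hP =>
      obtain ⟨x, hx⟩ := hP.isBlockList.1 B List.mem_cons_self
      simpa using hP.mem_Icc (mem_support.2 ⟨B, List.mem_cons_self, hx⟩)
  · simp [h, IsBlockList]

lemma Icc_union_image_add (a b : ℕ) : Icc 1 a ∪ (Icc 1 b).image (· + a) = Icc 1 (a + b) := by
  ext x
  simp only [image_add_right_Icc, mem_union, Finset.mem_Icc]
  omega

lemma Icc_sub_eq_of_Icc_union_image_add {a a' : ℕ} {S : Finset ℕ} (hS : ∀ x ∈ S, 1 ≤ x)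
    (h : Icc 1 a' ∪ S.image (· + a') = Icc 1 a) : S = Icc 1 (a - a') := by
  ext x
  have hx := Finset.ext_iff.1 h (x + a')
  simp only [mem_union, mem_image, add_left_inj, exists_eq_right, Finset.mem_Icc] at hx ⊢
  constructor
  · intro hxS
    have := hx.1 (Or.inr hxS)
    have := hS x hxS
    omega
  · intro hxI
    exact (hx.2 (by omega)).resolve_left (by omega)

lemma support_lt_support_shiftUp {a b : ℕ} {σ τ : List Block} (hσ : IsPartition a σ)
    (hτ : IsPartition b τ) : ∀ x ∈ support σ, ∀ y ∈ support (shiftUp a τ), x < y := by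
  intro x hx y hy
  rw [support_shiftUp] at hy
  obtain ⟨z, hz, rfl⟩ := mem_image.1 hy
  have := Finset.mem_Icc.1 (hσ.mem_Icc hx)
  have := Finset.mem_Icc.1 (hτ.mem_Icc hz)
  omega

lemma slash_nil (a : ℕ) (σ : List Block) : slash a σ [] = σ := by
  simp [slash, shiftUp]

lemma slash_assoc (a b : ℕ) (σ τ ρ : List Block) :
    slash a σ (slash b τ ρ) = slash (a + b) (slash a σ τ) ρ := by
  simp only [slash, shiftUp_append, shiftUp_shiftUp, add_comm b a, List.append_assoc]

lemma isPartition_slash {a b : ℕ} {σ τ : List Block} (hσ : IsPartition a σ)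
    (hτ : IsPartition b τ) : IsPartition (a + b) (slash a σ τ) :=
  isPartition_iff.2 ⟨hσ.isBlockList.append (hτ.isBlockList.shiftUp a)
    (support_lt_support_shiftUp hσ hτ),
    by rw [slash, support_append, support_shiftUp, hσ.support_eq, hτ.support_eq,
      Icc_union_image_add]⟩

lemma slash_left_cancel {a : ℕ} {σ τ τ' : List Block} (h : slash a σ τ = slash a σ τ') :
    τ = τ' :=
  shiftUp_injective a (List.append_cancel_left h)

lemma eq_nil_of_append_eq_shiftUp {a b : ℕ} {ρ X τ : List Block}
    (hρ : ∀ x ∈ support ρ, x ≤ a) (hτ : IsPartition b τ) (h : ρ ++ X = shiftUp a τ) :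
    ρ = [] := by
  match ρ, τ, h with
  | [], _, _ => rfl
  | _ :: _, [], h => simp [shiftUp] at h
  | B :: ρ, C :: τ, h =>
    simp only [shiftUp, List.cons_append, List.map_cons, List.cons.injEq] at h
    obtain ⟨y, hy⟩ := hτ.isBlockList.1 C List.mem_cons_self
    have h1 := Finset.mem_Icc.1 (hτ.mem_Icc (mem_support.2 ⟨C, List.mem_cons_self, hy⟩))
    have h2 := hρ (y + a) (by simp [h.1, hy])
    omega

lemma exists_slash_of_slash_eq {a a' b b' : ℕ} {σ τ σ' τ' : List Block}
    (hσ : IsPartition a σ) (hτ : IsPartition b τ) (hσ' : IsPartition a' σ')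
    (hτ' : IsPartition b' τ') (hle : a' ≤ a) (h : slash a σ τ = slash a' σ' τ') :
    ∃ μ, IsPartition (a - a') μ ∧ σ = slash a' σ' μ := by
  rcases List.append_eq_append_iff.1 h with ⟨ρ, rfl, hρ⟩ | ⟨ρ, rfl, hρ⟩
  · have hle' : ∀ x ∈ support ρ, x ≤ a := fun x hx =>
      (Finset.mem_Icc.1 (hσ'.mem_Icc (by simp [hx]))).2.trans hle
    obtain rfl := eq_nil_of_append_eq_shiftUp hle' hτ hρ.symm
    rw [List.append_nil] at hσ' ⊢
    obtain rfl := hσ.unique hσ'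
    exact ⟨[], by simp [isPartition_zero_iff], (slash_nil a σ).symm⟩
  · obtain ⟨μ, ν, rfl, rfl, -⟩ := List.map_eq_append_iff.1 hρ
    refine ⟨μ, isPartition_iff.2 ⟨hτ'.isBlockList.sublist (List.sublist_append_left μ ν), ?_⟩, rfl⟩
    refine Icc_sub_eq_of_Icc_union_image_add
      (fun x hx => (Finset.mem_Icc.1 (hτ'.mem_Icc (by simp [hx]))).1) ?_
    rw [← hσ'.support_eq, ← hσ.support_eq, support_append]
    exact congrArg (support σ' ∪ ·) (support_shiftUp (P := μ) a').symm

lemma splitProd_nil (a : ℕ) (σ : List Block) : splitProd a σ [] = σ := by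
  simp [splitProd_eq_zipUnion, shiftUp]

lemma splitProd_assoc (a b : ℕ) (σ τ ρ : List Block) :
    splitProd a σ (splitProd b τ ρ) = splitProd (a + b) (splitProd a σ τ) ρ := by
  simp only [splitProd_eq_zipUnion, shiftUp_zipUnion, shiftUp_shiftUp, add_comm b a,
    zipUnion_assoc]

lemma getD_splitProd (a : ℕ) (σ τ : List Block) (i : ℕ) :
    (splitProd a σ τ).getD i ∅ = σ.getD i ∅ ∪ (τ.getD i ∅).image (· + a) := by
  rw [splitProd_eq_zipUnion, getD_zipUnion, getD_shiftUp]

lemma isPartition_splitProd {a b : ℕ} {σ τ : List Block} (hσ : IsPartition a σ)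
    (hτ : IsPartition b τ) : IsPartition (a + b) (splitProd a σ τ) := by
  have hlt := support_lt_support_shiftUp hσ hτ
  rw [splitProd_eq_zipUnion, isPartition_iff, support_zipUnion, support_shiftUp, hσ.support_eq,
    hτ.support_eq, Icc_union_image_add]
  refine ⟨isBlockList_zipUnion hσ.isBlockList (hτ.isBlockList.shiftUp a) ?_, rfl⟩
  exact disjoint_left.2 fun x hx hx' => (hlt x hx x hx').false

lemma splitProd_left_cancel {a b b' : ℕ} {σ τ τ' : List Block} (hσ : IsPartition a σ)
    (hτ : IsPartition b τ) (hτ' : IsPartition b' τ') (h : splitProd a σ τ = splitProd a σ τ') :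
    τ = τ' := by
  refine shiftUp_injective a ((hτ.isBlockList.shiftUp a).ext_getD (hτ'.isBlockList.shiftUp a)
    fun i => ?_)
  have hdisj : ∀ {c} {ρ : List Block}, IsPartition c ρ →
      Disjoint (σ.getD i ∅) ((shiftUp a ρ).getD i ∅) := fun hρ =>
    disjoint_left.2 fun x hx hx' => (support_lt_support_shiftUp hσ hρ x
      (getD_subset_support i hx) x (getD_subset_support i hx')).false
  have hi := congrArg (·.getD i ∅) h
  simp only [splitProd_eq_zipUnion, getD_zipUnion] at hi
  rw [← union_sdiff_cancel_left (hdisj hτ), hi, union_sdiff_cancel_left (hdisj hτ')]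

lemma filter_le_getD_splitProd {a a' : ℕ} {σ : List Block} (hσ : IsPartition a' σ)
    (hle : a' ≤ a) (τ : List Block) (i : ℕ) :
    ((splitProd a' σ τ).getD i ∅).filter (· ≤ a) =
      σ.getD i ∅ ∪ ((τ.getD i ∅).filter (· ≤ a - a')).image (· + a') := by
  rw [getD_splitProd, filter_union, filter_image, filter_true_of_mem fun x hx =>
    (Finset.mem_Icc.1 (hσ.mem_Icc (getD_subset_support i hx))).2.trans hle]
  congr 2
  exact filter_congr fun x _ => by omega

lemma getD_map_range {l : ℕ} {d : ℕ → Block} (hd : ∀ i, l ≤ i → d i = ∅) (i : ℕ) :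
    ((List.range l).map d).getD i ∅ = d i := by
  rcases lt_or_ge i l with hi | hi
  · rw [List.getD_eq_getElem _ _ (by simpa using hi)]
    simp
  · rw [List.getD_eq_default _ _ (by simpa using hi), hd i hi]

/-- The blocks meeting `[1, c]` come first, since the blocks are sorted by their minima. -/
lemma IsBlockList.filter_le_getD_nonempty_of_le {τ : List Block} (hτ : IsBlockList τ) {c i j : ℕ}
    (hij : i ≤ j) (hj : ((τ.getD j ∅).filter (· ≤ c)).Nonempty) :
    ((τ.getD i ∅).filter (· ≤ c)).Nonempty := by
  obtain hij | rfl := hij.lt_or_eq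
  swap; · exact hj
  obtain ⟨x, hx⟩ := hj
  rw [mem_filter] at hx
  have hτi : (τ.getD i ∅).Nonempty :=
    hτ.getD_nonempty_iff.2 (hij.trans (hτ.getD_nonempty_iff.1 ⟨x, hx.1⟩))
  have hlt : (τ.getD i ∅).min' hτi < x := by
    rw [← WithTop.coe_lt_coe, coe_min']
    exact (hτ.min_getD_lt hij (hτ.getD_nonempty_iff.1 hτi)).trans_le (min_le hx.1)
  exact ⟨_, mem_filter.2 ⟨min'_mem _ hτi, hlt.le.trans hx.2⟩⟩

lemma IsPartition.exists_getD_eq_filter_le {b c : ℕ} {τ : List Block} (hτ : IsPartition b τ)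
    (hc : c ≤ b) : ∃ μ, IsPartition c μ ∧ ∀ i, μ.getD i ∅ = (τ.getD i ∅).filter (· ≤ c) := by
  set d : ℕ → Block := fun i => (τ.getD i ∅).filter (· ≤ c) with hd
  have hτlen : ∀ {i}, (d i).Nonempty → i < τ.length := fun h =>
    hτ.isBlockList.getD_nonempty_iff.1 (h.mono (filter_subset _ _))
  have hex : ∃ l, ¬ (d l).Nonempty := ⟨τ.length, fun h => (hτlen h).false⟩
  classical
  set l := Nat.find hex
  have hdl : ∀ i, (d i).Nonempty ↔ i < l := fun i =>
    ⟨fun h => lt_of_not_ge fun hli => Nat.find_spec hex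
      (hτ.isBlockList.filter_le_getD_nonempty_of_le hli h),
      fun h => not_not.1 (Nat.find_min hex h)⟩
  have hget := getD_map_range (l := l) (d := d) fun i hi => by
    rw [← not_nonempty_iff_eq_empty, hdl]
    omega
  refine ⟨(List.range l).map d, isPartition_iff.2 ⟨isBlockList_of_getD ?_ ?_, ?_⟩, hget⟩
  · intro i hi
    rw [hget, hdl]
    simpa using hi
  · intro i j hij hj
    simp only [List.length_map, List.length_range] at hj
    rw [hget, hget, min_filter_le_of_nonempty ((hdl i).2 (hij.trans hj)),
      min_filter_le_of_nonempty ((hdl j).2 hj)]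
    exact ⟨(hτ.isBlockList.disjoint_getD hij.ne).mono (filter_subset _ _) (filter_subset _ _),
      hτ.isBlockList.min_getD_lt hij (hτlen ((hdl i).2 (hij.trans hj)))⟩
  · ext x
    rw [mem_support_iff_getD]
    simp_rw [hget, hd, mem_filter, exists_and_right]
    rw [← mem_support_iff_getD, hτ.support_eq, Finset.mem_Icc, Finset.mem_Icc]
    omega

lemma exists_splitProd_of_splitProd_eq {a a' b b' : ℕ} {σ τ σ' τ' : List Block}
    (hσ : IsPartition a σ) (hτ : IsPartition b τ) (hσ' : IsPartition a' σ')
    (hτ' : IsPartition b' τ') (hab : a + b = a' + b') (hle : a' ≤ a)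
    (h : splitProd a σ τ = splitProd a' σ' τ') :
    ∃ μ, IsPartition (a - a') μ ∧ σ = splitProd a' σ' μ := by
  obtain ⟨μ, hμ, hμget⟩ := hτ'.exists_getD_eq_filter_le (c := a - a') (by omega)
  refine ⟨μ, hμ, hσ.isBlockList.ext_getD (isPartition_splitProd hσ' hμ).isBlockList fun i => ?_⟩
  have hi := congrArg (fun P : List Block => (P.getD i ∅).filter (· ≤ a)) h
  simp only [filter_le_getD_splitProd hσ le_rfl, filter_le_getD_splitProd hσ' hle] at hi
  rw [Nat.sub_self, filter_false_of_mem fun x hx => by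
    have := Finset.mem_Icc.1 (hτ.mem_Icc (getD_subset_support i hx)); omega,
    image_empty, union_empty] at hi
  rw [hi, getD_splitProd, hμget]

lemma finite_setOf_isPartition (n : ℕ) : {P : List Block | IsPartition n P}.Finite := by
  classical
  set S := (Icc 1 n).powerset
  refine ((List.finite_length_le S (Fintype.card S)).image (List.map Subtype.val)).subset
    fun P hP => ?_
  have hS : ∀ B ∈ P, B ∈ S := fun B hB =>
    mem_powerset.2 fun x hx => hP.mem_Icc (mem_support.2 ⟨B, hB, hx⟩)
  refine ⟨P.pmap Subtype.mk hS, ?_, by simp [List.map_pmap]⟩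
  exact (hP.isBlockList.nodup.pmap fun _ _ _ _ h => congrArg Subtype.val h).length_le_card

noncomputable def partitions (n : ℕ) : Finset (List Block) :=
  (finite_setOf_isPartition n).toFinset

@[simp] lemma mem_partitions {n : ℕ} {P : List Block} : P ∈ partitions n ↔ IsPartition n P :=
  Set.Finite.mem_toFinset _

lemma partitions_zero : partitions 0 = {[]} := by
  ext P
  simp [isPartition_zero_iff]

/-- The properties shared by the slash and the split product that make the factorization of a
partition into an indecomposable left factor and a right factor unique. -/
structure PartitionProduct where
  op : ℕ → List Block → List Block → List Block
  op_nil (a : ℕ) (σ : List Block) : op a σ [] = σ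
  op_assoc (a b : ℕ) (σ τ ρ : List Block) : op a σ (op b τ ρ) = op (a + b) (op a σ τ) ρ
  isPartition_op {a b : ℕ} {σ τ : List Block} :
    IsPartition a σ → IsPartition b τ → IsPartition (a + b) (op a σ τ)
  op_left_cancel {a b b' : ℕ} {σ τ τ' : List Block} :
    IsPartition a σ → IsPartition b τ → IsPartition b' τ' → op a σ τ = op a σ τ' → τ = τ'
  exists_eq_op_of_op_eq {a b a' b' : ℕ} {σ τ σ' τ' : List Block} :
    IsPartition a σ → IsPartition b τ → IsPartition a' σ' → IsPartition b' τ' →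
      a + b = a' + b' → a' ≤ a → op a σ τ = op a' σ' τ' →
        ∃ μ, IsPartition (a - a') μ ∧ σ = op a' σ' μ

namespace PartitionProduct

variable (M : PartitionProduct)

def Decomposable (n : ℕ) (P : List Block) : Prop :=
  ∃ (a b : ℕ) (σ τ : List Block), 0 < a ∧ 0 < b ∧ a + b = n ∧
    IsPartition a σ ∧ IsPartition b τ ∧ P = M.op a σ τ

open scoped Classical in
noncomputable def indecomposables (n : ℕ) : Finset (List Block) :=
  (partitions n).filter fun P => ¬ M.Decomposable n P

lemma coe_indecomposables (n : ℕ) :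
    (M.indecomposables n : Set (List Block)) = {P | IsPartition n P ∧ ¬ M.Decomposable n P} := by
  ext P
  simp [indecomposables]

lemma indecomposables_zero : M.indecomposables 0 = partitions 0 := by
  classical
  exact filter_true_of_mem fun P _ ⟨a, b, _, _, ha, hb, hab, _⟩ => by omega

/-- Splitting off the shortest nonempty left factor leaves an indecomposable one. -/
lemma exists_eq_op_indecomposable {n : ℕ} {P : List Block} (hn : 0 < n)
    (hP : IsPartition n P) : ∃ a σ τ, 0 < a ∧ a ≤ n ∧ IsPartition a σ ∧
      ¬ M.Decomposable a σ ∧ IsPartition (n - a) τ ∧ P = M.op a σ τ := by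
  classical
  have hex : ∃ a, 0 < a ∧ a ≤ n ∧ ∃ σ τ, IsPartition a σ ∧ IsPartition (n - a) τ ∧
      P = M.op a σ τ :=
    ⟨n, hn, le_rfl, P, [], hP, by simp [isPartition_zero_iff], (M.op_nil n P).symm⟩
  obtain ⟨ha, han, σ, τ, hσ, hτ, hPeq⟩ := Nat.find_spec hex
  refine ⟨_, σ, τ, ha, han, hσ, ?_, hτ, hPeq⟩
  rintro ⟨c, d, ρ, ν, hc, hd, hcd, hρ, hν, rfl⟩
  refine Nat.find_min hex (m := c) (by omega) ⟨hc, by omega, ρ, M.op d ν τ, hρ, ?_, ?_⟩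
  · convert M.isPartition_op hν hτ using 1
    omega
  · rw [hPeq, M.op_assoc, hcd]

lemma eq_of_op_eq {a b a' b' : ℕ} {σ τ σ' τ' : List Block} (ha : 0 < a) (ha' : 0 < a')
    (hσ : IsPartition a σ) (hσd : ¬ M.Decomposable a σ) (hτ : IsPartition b τ)
    (hσ' : IsPartition a' σ') (hσ'd : ¬ M.Decomposable a' σ') (hτ' : IsPartition b' τ')
    (hab : a + b = a' + b') (h : M.op a σ τ = M.op a' σ' τ') : a = a' ∧ σ = σ' ∧ τ = τ' := by
  wlog hle : a' ≤ a generalizing a b a' b' σ τ σ' τ'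
  · obtain ⟨h1, h2, h3⟩ := this ha' ha hσ' hσ'd hτ' hσ hσd hτ hab.symm h.symm (by omega)
    exact ⟨h1.symm, h2.symm, h3.symm⟩
  obtain ⟨μ, hμ, rfl⟩ := M.exists_eq_op_of_op_eq hσ hτ hσ' hτ' hab hle h
  obtain hlt | rfl := hle.lt_or_eq
  · exact (hσd ⟨a', a - a', σ', μ, ha', by omega, by omega, hσ', hμ, rfl⟩).elim
  · rw [Nat.sub_self, isPartition_zero_iff] at hμ
    subst hμ
    rw [M.op_nil] at h ⊢
    exact ⟨rfl, rfl, M.op_left_cancel hσ' hτ hτ' h⟩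

lemma card_partitions {n : ℕ} (hn : 0 < n) :
    (partitions n).card =
      ∑ a ∈ Icc 1 n, (M.indecomposables a).card * (partitions (n - a)).card := by
  simp_rw [← card_product, ← card_sigma]
  symm
  refine card_bij (fun x _ => M.op x.1 x.2.1 x.2.2) ?_ ?_ ?_
  · rintro ⟨a, σ, τ⟩ hx
    simp only [mem_sigma, mem_product, Finset.mem_Icc, indecomposables, mem_filter,
      mem_partitions] at hx ⊢
    simpa [Nat.add_sub_cancel' hx.1.2] using M.isPartition_op hx.2.1.1 hx.2.2
  · rintro ⟨a, σ, τ⟩ hx ⟨a', σ', τ'⟩ hx' h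
    simp only [mem_sigma, mem_product, Finset.mem_Icc, indecomposables, mem_filter,
      mem_partitions] at hx hx'
    obtain ⟨rfl, rfl, rfl⟩ := M.eq_of_op_eq (by omega) (by omega) hx.2.1.1 hx.2.1.2 hx.2.2
      hx'.2.1.1 hx'.2.1.2 hx'.2.2 (by omega) h
    rfl
  · intro P hP
    obtain ⟨a, σ, τ, ha, han, hσ, hσd, hτ, rfl⟩ :=
      M.exists_eq_op_indecomposable hn (mem_partitions.1 hP)
    exact ⟨⟨a, σ, τ⟩, by simp [indecomposables, Nat.succ_le_of_lt ha, han, hσ, hσd, hτ], rfl⟩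

end PartitionProduct

theorem PartitionProduct.card_indecomposables_eq (M N : PartitionProduct) (n : ℕ) :
    (M.indecomposables n).card = (N.indecomposables n).card := by
  induction n using Nat.strong_induction_on with
  | _ n ih =>
  obtain _ | m := n
  · rw [M.indecomposables_zero, N.indecomposables_zero]
  have hM := M.card_partitions (by omega : 0 < m + 1)
  have hN := N.card_partitions (by omega : 0 < m + 1)
  rw [sum_Icc_succ_top (by omega), Nat.sub_self, partitions_zero, card_singleton,
    mul_one] at hM hN
  have hsum : ∑ a ∈ Icc 1 m, (M.indecomposables a).card * (partitions (m + 1 - a)).card =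
      ∑ a ∈ Icc 1 m, (N.indecomposables a).card * (partitions (m + 1 - a)).card :=
    sum_congr rfl fun a ha => by rw [ih a (by simp at ha; omega)]
  omega

def slashProduct : PartitionProduct where
  op := slash
  op_nil := slash_nil
  op_assoc := slash_assoc
  isPartition_op := isPartition_slash
  op_left_cancel _ _ _ := slash_left_cancel
  exists_eq_op_of_op_eq hσ hτ hσ' hτ' _ := exists_slash_of_slash_eq hσ hτ hσ' hτ'

def splitProduct : PartitionProduct where
  op := splitProd
  op_nil := splitProd_nil
  op_assoc := splitProd_assoc
  isPartition_op := isPartition_splitProd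
  op_left_cancel := splitProd_left_cancel
  exists_eq_op_of_op_eq := exists_splitProd_of_splitProd_eq

theorem card_atomic_eq_card_unsplitable_general (n : ℕ) :
    {P : List Block | IsPartition n P ∧ Atomic n P}.ncard =
      {P : List Block | IsPartition n P ∧ ¬ Splitable n P}.ncard := by
  have h := PartitionProduct.card_indecomposables_eq slashProduct splitProduct n
  rwa [← Set.ncard_coe_finset, ← Set.ncard_coe_finset, PartitionProduct.coe_indecomposables,
    PartitionProduct.coe_indecomposables] at h

/-- For every positive integer `n`, the number of atomic partitions
of `[n]` equals the number of unsplitable partitions of `[n]`. -/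
theorem card_atomic_eq_card_unsplitable (n : ℕ) (hn : 0 < n) :
    {P : List Block | IsPartition n P ∧ Atomic n P}.ncard =
      {P : List Block | IsPartition n P ∧ ¬ Splitable n P}.ncard :=
  card_atomic_eq_card_unsplitable_general n
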